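/- arXiv:1404.7596 — 8 statements merged into one kernel-verified Lean document; each statement's English description precedes it below -/
import Mathlib

section
/- Let S ⊆ [m, M] ⊆ (0, ∞) be a nonempty compact set of real numbers with m = min S > 0 and M = max S ≤ 1. For every λ with 1/2 ≤ λ ≤ (1+m)/2, there exist continuous functions v₁, v₂ : S → ℂ with |v₁(s)| = |v₂(s)| = 1 for all s ∈ S (i.e., unitaries in C(S)) such that s = λ·v₁(s) + (1−λ)·v₂(s) for all s ∈ S. -/
/-!
The points `0`, `λ ω₁` and `t = λ ω₁ + (1 - λ) ω₂` form a triangle with sides `λ`, `1 - λ` and `t`,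
which exists exactly when `|2λ - 1| ≤ t ≤ 1`. The law of cosines makes the real part of its apex
`λ ω₁` a rational function of `t`, and its height is a square root, so the apex depends continuously
on `t > 0`; then `ω₁ = apex / λ` and `ω₂ = (t - apex) / (1 - λ)`. These divisions are why the cases
`λ ∈ {0, 1}` are treated apart: there the constraint forces `t = 1`.
-/

open Complex

noncomputable def triangleApexRe (lam t : ℝ) : ℝ := (t ^ 2 + 2 * lam - 1) / (2 * t)

noncomputable def triangleApex (lam t : ℝ) : ℂ :=
  triangleApexRe lam t + √(lam ^ 2 - triangleApexRe lam t ^ 2) * I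

section TriangleApex

variable {lam t : ℝ}

lemma triangleApexRe_sq_le (ht0 : 0 < t) (ht1 : t ≤ 1) (hlam : |2 * lam - 1| ≤ t) :
    triangleApexRe lam t ^ 2 ≤ lam ^ 2 := by
  have hfactor : (2 * lam * t) ^ 2 - (t ^ 2 + 2 * lam - 1) ^ 2
      = (1 - t ^ 2) * (t ^ 2 - (2 * lam - 1) ^ 2) := by ring
  have ht : 0 ≤ 1 - t ^ 2 := by nlinarith
  have hlam' : 0 ≤ t ^ 2 - (2 * lam - 1) ^ 2 := by
    rw [sub_nonneg, ← sq_abs]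
    exact pow_le_pow_left₀ (abs_nonneg _) hlam 2
  rw [triangleApexRe, div_pow, div_le_iff₀ (by positivity)]
  nlinarith [mul_nonneg ht hlam']

lemma norm_triangleApex (ht0 : 0 < t) (ht1 : t ≤ 1) (hlam : |2 * lam - 1| ≤ t) :
    ‖triangleApex lam t‖ = lam := by
  have hlam0 : 0 ≤ lam := by linarith [(abs_le.mp (hlam.trans ht1)).1]
  rw [triangleApex, norm_add_mul_I, Real.sq_sqrt (sub_nonneg.2 (triangleApexRe_sq_le ht0 ht1 hlam)),
    add_sub_cancel, Real.sqrt_sq hlam0]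

lemma norm_sub_triangleApex (ht0 : 0 < t) (ht1 : t ≤ 1) (hlam : |2 * lam - 1| ≤ t) :
    ‖(t : ℂ) - triangleApex lam t‖ = 1 - lam := by
  have hlam1 : 0 ≤ 1 - lam := by linarith [(abs_le.mp (hlam.trans ht1)).2]
  set x := triangleApexRe lam t with hx
  have hcos : 2 * t * x = t ^ 2 + 2 * lam - 1 := by rw [hx, triangleApexRe]; field_simp
  have hsub : (t : ℂ) - triangleApex lam t = ↑(t - x) + ↑(-√(lam ^ 2 - x ^ 2)) * I := by
    rw [triangleApex, ← hx]; push_cast; ring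
  rw [hsub, norm_add_mul_I, neg_sq, Real.sq_sqrt (sub_nonneg.2 (triangleApexRe_sq_le ht0 ht1 hlam)),
    show (t - x) ^ 2 + (lam ^ 2 - x ^ 2) = (1 - lam) ^ 2 by linear_combination -hcos,
    Real.sqrt_sq hlam1]

lemma Continuous.triangleApex {X : Type*} [TopologicalSpace X] {f : X → ℝ} (hf : Continuous f)
    (h0 : ∀ x, f x ≠ 0) : Continuous fun x ↦ _root_.triangleApex lam (f x) := by
  have hre : Continuous fun x ↦ triangleApexRe lam (f x) :=
    (by fun_prop : Continuous _).div (by fun_prop) fun x ↦ mul_ne_zero two_ne_zero (h0 x)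
  unfold _root_.triangleApex
  fun_prop

end TriangleApex

theorem ContinuousMap.exists_unitary_convex_decomposition {X : Type*} [TopologicalSpace X]
    (f : C(X, ℝ)) (lam : ℝ) (hf0 : ∀ x, 0 < f x) (hf1 : ∀ x, f x ≤ 1)
    (hlam : ∀ x, |2 * lam - 1| ≤ f x) :
    ∃ v₁ v₂ : C(X, ℂ), (∀ x, ‖v₁ x‖ = 1) ∧ (∀ x, ‖v₂ x‖ = 1) ∧
      ∀ x, (f x : ℂ) = lam * v₁ x + (1 - lam) * v₂ x := by
  by_cases hdeg : lam ≤ 0 ∨ 1 ≤ lam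
  · have hf : ∀ x, f x = 1 := fun x ↦ le_antisymm (hf1 x) <| by
      refine le_trans (le_abs.2 ?_) (hlam x)
      rcases hdeg with h | h
      · exact .inr (by linarith)
      · exact .inl (by linarith)
    exact ⟨1, 1, by simp, by simp, fun x ↦ by simp [hf x]⟩
  simp only [not_or, not_le] at hdeg
  obtain ⟨hlam0, hlam1⟩ := hdeg
  replace hlam1 : 0 < 1 - lam := sub_pos.2 hlam1
  have hapex : Continuous fun x ↦ triangleApex lam (f x) :=
    f.continuous.triangleApex fun x ↦ (hf0 x).ne'
  refine ⟨⟨fun x ↦ triangleApex lam (f x) / lam, by fun_prop⟩,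
    ⟨fun x ↦ (f x - triangleApex lam (f x)) / (1 - lam), by fun_prop⟩, fun x ↦ ?_, fun x ↦ ?_,
    fun x ↦ ?_⟩
  · rw [ContinuousMap.coe_mk, norm_div, norm_triangleApex (hf0 x) (hf1 x) (hlam x), norm_real,
      Real.norm_of_nonneg hlam0.le, div_self hlam0.ne']
  · rw [ContinuousMap.coe_mk, norm_div, norm_sub_triangleApex (hf0 x) (hf1 x) (hlam x),
      ← ofReal_one, ← ofReal_sub, norm_real, Real.norm_of_nonneg hlam1.le, div_self hlam1.ne']
  · have : (lam : ℂ) ≠ 0 := ofReal_ne_zero.2 hlam0.ne'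
    have : (1 - lam : ℂ) ≠ 0 := by exact_mod_cast hlam1.ne'
    simp only [ContinuousMap.coe_mk]
    field_simp
    ring

theorem stmt_2_general (S : Set ℝ) (m : ℝ) (hm0 : 0 < m)
    (hmin : IsLeast S m) (hmax : ∀ s ∈ S, s ≤ 1)
    (lam : ℝ) (hl1 : 1 / 2 ≤ lam) (hl2 : lam ≤ (1 + m) / 2) :
    ∃ v₁ v₂ : C(S, ℂ), (∀ s, ‖v₁ s‖ = 1) ∧ (∀ s, ‖v₂ s‖ = 1) ∧
      ∀ s : S, ((s : ℝ) : ℂ) = lam * v₁ s + (1 - lam) * v₂ s := by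
  have hm : ∀ s : S, m ≤ s := fun s ↦ hmin.2 s.2
  refine ContinuousMap.exists_unitary_convex_decomposition ⟨(↑), continuous_subtype_val⟩ lam
    (fun s ↦ hm0.trans_le (hm s)) (fun s ↦ hmax s s.2) fun s ↦ ?_
  show |2 * lam - 1| ≤ (s : ℝ)
  rw [abs_of_nonneg (by linarith)]
  linarith [hm s]

theorem stmt_2 (S : Set ℝ) (hS : IsCompact S) (hne : S.Nonempty) (m : ℝ) (hm0 : 0 < m)
    (hmin : IsLeast S m) (hmax : ∀ s ∈ S, s ≤ 1)
    (lam : ℝ) (hl1 : 1 / 2 ≤ lam) (hl2 : lam ≤ (1 + m) / 2) :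
    ∃ v₁ v₂ : C(S, ℂ), (∀ s, ‖v₁ s‖ = 1) ∧ (∀ s, ‖v₂ s‖ = 1) ∧
      ∀ s : S, ((s : ℝ) : ℂ) = lam * v₁ s + (1 - lam) * v₂ s :=
  stmt_2_general S m hm0 hmin hmax lam hl1 hl2
end

section
/- Let A be a unital C*-algebra and a ∈ A a positive invertible element with ‖a‖ ≤ 1. Set m = ‖a⁻¹‖⁻¹ (the minimum of the spectrum of a). Then for every λ with 1/2 ≤ λ ≤ (1+m)/2 there exist unitaries u₁, u₂ ∈ A with a = λu₁ + (1−λ)u₂. -/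
/-!
For every `x ∈ [2λ - 1, 1]` the circles `|w| = λ` and `|x - w| = 1 - λ` meet, so
`x = w + (x - w)` with `|w| = λ` and `|x - w| = 1 - λ`; taking the intersection point in the
upper half-plane makes `w` continuous in `x > 0`. Since the spectrum of `a` lies in
`[‖a⁻¹‖⁻¹, 1] ⊆ [2λ - 1, 1]`, the continuous functional calculus turns this into
`a = w(a) + (a - w(a))`, where `w(a) / λ` and `(a - w(a)) / (1 - λ)` are unitary.
-/

open Complex

/-- By the law of cosines, the common real part of the points of `|w| = r₁` and `|x - w| = r₂`. -/
noncomputable def circleIntersectionRe (r₁ r₂ x : ℝ) : ℝ := (x ^ 2 + r₁ ^ 2 - r₂ ^ 2) / (2 * x)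

noncomputable def circleIntersection (r₁ r₂ x : ℝ) : ℂ :=
  circleIntersectionRe r₁ r₂ x + √(r₁ ^ 2 - circleIntersectionRe r₁ r₂ x ^ 2) * I

section circleIntersection

variable {r₁ r₂ x : ℝ}

lemma sq_circleIntersectionRe_le (hlo : |r₁ - r₂| ≤ x) (hhi : x ≤ r₁ + r₂) :
    circleIntersectionRe r₁ r₂ x ^ 2 ≤ r₁ ^ 2 := by
  obtain ⟨hlo₁, hlo₂⟩ := abs_le.mp hlo
  rcases (abs_nonneg _ |>.trans hlo).eq_or_lt with rfl | hx
  · simp [circleIntersectionRe, sq_nonneg]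
  rw [circleIntersectionRe, div_pow, div_le_iff₀ (by positivity)]
  nlinarith [mul_nonneg
    (mul_nonneg (by linarith : (0 : ℝ) ≤ r₁ + r₂ - x) (by linarith : (0 : ℝ) ≤ x - r₁ + r₂))
    (mul_nonneg (by linarith : (0 : ℝ) ≤ x + r₁ - r₂) (by linarith : (0 : ℝ) ≤ x + r₁ + r₂))]

lemma norm_circleIntersection (hlo : |r₁ - r₂| ≤ x) (hhi : x ≤ r₁ + r₂) :
    ‖circleIntersection r₁ r₂ x‖ = r₁ := by
  have hr₁ : 0 ≤ r₁ := by linarith [abs_le.mp (hlo.trans hhi)]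
  rw [circleIntersection, norm_add_mul_I,
    Real.sq_sqrt (sub_nonneg.mpr (sq_circleIntersectionRe_le hlo hhi)), add_sub_cancel,
    Real.sqrt_sq hr₁]

lemma norm_sub_circleIntersection (hlo : |r₁ - r₂| ≤ x) (hhi : x ≤ r₁ + r₂) :
    ‖(x : ℂ) - circleIntersection r₁ r₂ x‖ = r₂ := by
  have hr₂ : 0 ≤ r₂ := by linarith [abs_le.mp (hlo.trans hhi)]
  set p := circleIntersectionRe r₁ r₂ x with hp
  have hsq : (x - p) ^ 2 + (r₁ ^ 2 - p ^ 2) = r₂ ^ 2 := by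
    rcases eq_or_ne x 0 with rfl | hx
    · rw [abs_nonpos_iff, sub_eq_zero] at hlo
      simp [hp, circleIntersectionRe, hlo]
    · rw [hp, circleIntersectionRe]
      field_simp
      ring
  have hsplit : (x : ℂ) - circleIntersection r₁ r₂ x = ↑(x - p) + ↑(-√(r₁ ^ 2 - p ^ 2)) * I := by
    push_cast [circleIntersection, ← hp]
    ring
  rw [hsplit, norm_add_mul_I, neg_sq,
    Real.sq_sqrt (sub_nonneg.mpr (sq_circleIntersectionRe_le hlo hhi)), hsq, Real.sqrt_sq hr₂]

lemma continuousOn_circleIntersection :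
    ContinuousOn (circleIntersection r₁ r₂) {x | x ≠ 0} := by
  have hre : ContinuousOn (circleIntersectionRe r₁ r₂) {x | x ≠ 0} :=
    (by fun_prop : Continuous fun x : ℝ ↦ x ^ 2 + r₁ ^ 2 - r₂ ^ 2).continuousOn.div
      (by fun_prop) fun x hx ↦ mul_ne_zero two_ne_zero hx
  unfold circleIntersection
  fun_prop

end circleIntersection

lemma inv_norm_inv_le_norm_of_mem_spectrum {𝕜 A : Type*} [NormedField 𝕜] [NormedRing A]
    [NormedAlgebra 𝕜 A] [CompleteSpace A] [NormOneClass A] (a : Aˣ) {k : 𝕜}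
    (hk : k ∈ spectrum 𝕜 (a : A)) : ‖(↑a⁻¹ : A)‖⁻¹ ≤ ‖k‖ := by
  have hk0 : k ≠ 0 := by
    rintro rfl
    exact spectrum.zero_notMem 𝕜 a.isUnit hk
  have hinv : k⁻¹ ∈ spectrum 𝕜 (↑a⁻¹ : A) := by
    simpa using (spectrum.inv_mem_iff (r := Units.mk0 k hk0) (a := a)).mp hk
  have hle := spectrum.norm_le_norm_of_mem hinv
  rw [norm_inv] at hle
  exact inv_le_of_inv_le₀ (norm_pos_iff.mpr hk0) hle

lemma spectrum_subset_Icc_of_nonneg {A : Type*} [CStarAlgebra A] [PartialOrder A]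
    [StarOrderedRing A] [Nontrivial A] (a : Aˣ) (ha : 0 ≤ (a : A)) :
    spectrum ℝ (a : A) ⊆ Set.Icc ‖(↑a⁻¹ : A)‖⁻¹ ‖(a : A)‖ := by
  intro x hx
  have hx0 : 0 ≤ x := spectrum_nonneg_of_nonneg ha hx
  have hlo := inv_norm_inv_le_norm_of_mem_spectrum a hx
  have hhi := spectrum.norm_le_norm_of_mem hx
  rw [Real.norm_of_nonneg hx0] at hlo hhi
  exact ⟨hlo, hhi⟩

lemma exists_mem_unitary_cfc_eq_smul {A : Type*} [CStarAlgebra A] (a : A) [IsStarNormal a]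
    (f : ℂ → ℂ) (r : ℝ) (hf : ContinuousOn f (spectrum ℂ a))
    (h : ∀ z ∈ spectrum ℂ a, ‖f z‖ = r) :
    ∃ u ∈ unitary A, cfc f a = (r : ℂ) • u := by
  rcases eq_or_ne r 0 with rfl | hr
  · refine ⟨1, one_mem _, ?_⟩
    rw [ofReal_zero, zero_smul, ← cfc_zero ℂ a]
    exact cfc_congr fun z hz ↦ norm_eq_zero.mp (h z hz)
  refine ⟨cfc (fun z ↦ (r : ℂ)⁻¹ * f z) a, ?_, ?_⟩
  · rw [cfc_unitary_iff _ a]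
    intro z hz
    rw [RCLike.star_def, map_mul, mul_mul_mul_comm, conj_mul', conj_mul', h z hz]
    simp only [norm_inv, norm_real, Real.norm_eq_abs, ← ofReal_pow, inv_pow, sq_abs]
    exact_mod_cast inv_mul_cancel₀ (pow_ne_zero 2 hr)
  · rw [cfc_const_mul _ _ _ hf, smul_smul, mul_inv_cancel₀ (by exact_mod_cast hr), one_smul]

theorem stmt_3 {A : Type*} [NormedRing A] [StarRing A] [CStarRing A] [CompleteSpace A]
    [NormedAlgebra ℂ A] [StarModule ℂ A] [PartialOrder A] [StarOrderedRing A]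
    (a : Aˣ) (ha : 0 ≤ (a : A)) (hna : ‖(a : A)‖ ≤ 1)
    (lam : ℝ) (h1 : 1 / 2 ≤ lam) (h2 : lam ≤ (1 + ‖((a⁻¹ : Aˣ) : A)‖⁻¹) / 2) :
    ∃ u₁ u₂ : A, u₁ ∈ unitary A ∧ u₂ ∈ unitary A ∧
      (a : A) = ((lam : ℂ)) • u₁ + (((1 - lam : ℝ) : ℂ)) • u₂ := by
  obtain hA | hA := subsingleton_or_nontrivial A
  · exact ⟨1, 1, one_mem _, one_mem _, Subsingleton.elim _ _⟩
  let _ : CStarAlgebra A := {}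
  have hsa : IsSelfAdjoint (a : A) := .of_nonneg ha
  have _ := hsa.isStarNormal
  have hm : 0 < ‖(↑a⁻¹ : A)‖⁻¹ := inv_pos.mpr (norm_pos_iff.mpr a⁻¹.ne_zero)
  have hspec : ∀ z ∈ spectrum ℂ (a : A), z = z.re ∧ 0 < z.re ∧
      |lam - (1 - lam)| ≤ z.re ∧ z.re ≤ lam + (1 - lam) := by
    intro z hz
    have hre := hsa.mem_spectrum_eq_re hz
    obtain ⟨hlo, hhi⟩ := spectrum_subset_Icc_of_nonneg a ha
      ((spectrum.algebraMap_mem_iff ℂ).mp (hre ▸ hz))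
    refine ⟨hre, by linarith, ?_, by linarith⟩
    rw [abs_of_nonneg (by linarith)]
    linarith
  set w : ℂ → ℂ := fun z ↦ circleIntersection lam (1 - lam) z.re
  have hw : ContinuousOn w (spectrum ℂ (a : A)) :=
    continuousOn_circleIntersection.comp continuous_re.continuousOn
      fun z hz ↦ (hspec z hz).2.1.ne'
  obtain ⟨u₁, hu₁, h₁⟩ := exists_mem_unitary_cfc_eq_smul (a : A) w lam hw
    fun z hz ↦ norm_circleIntersection (hspec z hz).2.2.1 (hspec z hz).2.2.2
  obtain ⟨u₂, hu₂, h₂⟩ := exists_mem_unitary_cfc_eq_smul (a : A) (fun z ↦ z - w z) (1 - lam)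
    (continuousOn_id.sub hw) fun z hz ↦ by
      have hnorm := norm_sub_circleIntersection (hspec z hz).2.2.1 (hspec z hz).2.2.2
      rwa [← (hspec z hz).1] at hnorm
  refine ⟨u₁, u₂, hu₁, hu₂, ?_⟩
  rw [← h₁, ← h₂, ← cfc_add ..]
  simp only [add_sub_cancel, cfc_id' ℂ (a : A)]
end

section
/- Let A be a unital C*-algebra and let a ∈ A be invertible. Then dist(a, A \ A⁻¹) = ‖a⁻¹‖⁻¹, i.e., the distance from an invertible element to the set of non-invertible elements equals the reciprocal of the norm of its inverse. -/
theorem stmt_8 {A : Type*} [NormedRing A] [StarRing A] [CStarRing A] [CompleteSpace A]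
    [NormedAlgebra ℂ A] [StarModule ℂ A] (a : Aˣ) :
    Metric.infDist (a : A) {x : A | ¬ IsUnit x} = ‖((a⁻¹ : Aˣ) : A)‖⁻¹ := by
  obtain hA | hA := subsingleton_or_nontrivial A
  · have h1 : {x : A | ¬ IsUnit x} = (∅ : Set A) := by
      ext x; simp [isUnit_of_subsingleton]; exact Subsingleton.elim _ _
    have h2 : ((a⁻¹ : Aˣ) : A) = 0 := Subsingleton.elim _ _
    rw [h1, Metric.infDist_empty, h2, norm_zero, inv_zero]
  letI : CStarAlgebra A :=
    { ‹NormedRing A›, ‹StarRing A›, ‹CompleteSpace A›, ‹CStarRing A›,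
      ‹NormedAlgebra ℂ A›, ‹StarModule ℂ A› with }
  -- Setup: b = star a * a, s = sqrt b via CFC over ℝ
  set bu : Aˣ := star a * a with hbu_def
  have hb_coe : (bu : A) = star (a : A) * (a : A) := by
    simp [hbu_def]
  have hb_sa : IsSelfAdjoint (bu : A) := by
    rw [hb_coe]; exact IsSelfAdjoint.star_mul_self _
  set s : A := cfc Real.sqrt (bu : A) with hs_def
  have hs_sa : IsSelfAdjoint s := cfc_predicate _ _
  have hspec_b : ∀ x ∈ spectrum ℝ (bu : A), 0 ≤ x := by
    rw [hb_coe]; exact spectrum_star_mul_self_nonneg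
  have hss : s * s = (bu : A) := by
    rw [hs_def, ← cfc_mul ..]
    have h : cfc (fun x : ℝ => Real.sqrt x * Real.sqrt x) (bu : A) = cfc (id : ℝ → ℝ) (bu : A) :=
      cfc_congr fun x hx => Real.mul_self_sqrt (hspec_b x hx)
    rw [h, cfc_id ℝ _]
  -- spectrum of s is nonnegative
  have hspec_s : ∀ x ∈ spectrum ℝ s, 0 ≤ x := by
    intro x hx
    rw [hs_def, cfc_map_spectrum Real.sqrt (bu : A)] at hx
    obtain ⟨y, -, rfl⟩ := hx
    exact Real.sqrt_nonneg y
  -- s is invertible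
  have hcomm : Commute s (bu : A) := by
    rw [← hss]; exact (Commute.refl s).mul_right (Commute.refl s)
  have hs_unit : IsUnit s := by
    refine isUnit_iff_exists.mpr ⟨s * (↑bu⁻¹ : A), ?_, ?_⟩
    · rw [← mul_assoc, hss, Units.mul_inv]
    · rw [mul_assoc, ← (hcomm.units_inv_right).eq, ← mul_assoc, hss, Units.mul_inv]
  obtain ⟨su, hsu⟩ := hs_unit
  -- su * su = bu
  have hsusu : su * su = bu := by
    ext; push_cast [hsu]; exact hss
  -- su⁻¹ is selfadjoint
  have hstar_su : star su = su := Units.ext (by rw [Units.coe_star, hsu, hs_sa.star_eq])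
  have hsinv_sa : IsSelfAdjoint ((su⁻¹ : Aˣ) : A) := by
    calc star ((su⁻¹ : Aˣ) : A) = (((star su)⁻¹ : Aˣ) : A) := (Units.coe_star_inv su).symm
    _ = ((su⁻¹ : Aˣ) : A) := by rw [hstar_su]
  -- the key norm identity : ‖su⁻¹‖ = ‖a⁻¹‖
  have h1u : su⁻¹ * su⁻¹ = bu⁻¹ := by rw [← hsusu, mul_inv_rev]
  have hstar_ainv : star (a⁻¹) = (star a)⁻¹ := Units.ext (Units.coe_star_inv a).symm
  have h2u : a⁻¹ * star (a⁻¹) = bu⁻¹ := by rw [hstar_ainv, hbu_def, mul_inv_rev]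
  have hinvinv : ((a⁻¹ : Aˣ) : A) * star ((a⁻¹ : Aˣ) : A)
      = ((su⁻¹ : Aˣ) : A) * ((su⁻¹ : Aˣ) : A) := by
    rw [← Units.coe_star, ← Units.val_mul, h2u, ← h1u, Units.val_mul]
  have hnorm_eq : ‖((su⁻¹ : Aˣ) : A)‖ = ‖((a⁻¹ : Aˣ) : A)‖ := by
    have h1 : ‖((a⁻¹ : Aˣ) : A)‖ * ‖((a⁻¹ : Aˣ) : A)‖
        = ‖((su⁻¹ : Aˣ) : A)‖ * ‖((su⁻¹ : Aˣ) : A)‖ := by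
      rw [← CStarRing.norm_self_mul_star, hinvinv]
      nth_rewrite 1 [← hsinv_sa.star_eq]
      rw [CStarRing.norm_star_mul_self]
    nlinarith [norm_nonneg ((a⁻¹ : Aˣ) : A), norm_nonneg ((su⁻¹ : Aˣ) : A)]
  set r : ℝ := ‖((su⁻¹ : Aˣ) : A)‖ with hr_def
  have hr_pos : 0 < r := Units.norm_pos su⁻¹
  -- m = r⁻¹ is in the spectrum of s
  set m : ℝ := r⁻¹ with hm_def
  have hm_pos : 0 < m := inv_pos.mpr hr_pos
  have hm_mem : m ∈ spectrum ℝ s := by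
    rcases CStarAlgebra.norm_or_neg_norm_mem_spectrum (a := ((su⁻¹ : Aˣ) : A)) hsinv_sa with h | h
    · have := (spectrum.inv_mem_iff (r := Units.mk0 r hr_pos.ne') (a := su⁻¹)).mp h
      simpa [hsu] using this
    · exfalso
      have := (spectrum.inv_mem_iff (r := Units.mk0 (-r) (by linarith)) (a := su⁻¹)).mp h
      rw [inv_inv] at this
      have h2 : ((Units.mk0 (-r) (by linarith : (-r : ℝ) ≠ 0))⁻¹ : ℝˣ) = ((-r)⁻¹ : ℝ) := rfl
      rw [h2] at this
      have h3 := hspec_s _ (by simpa [hsu] using this)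
      have h4 : (-r)⁻¹ < 0 := inv_neg''.mpr (by linarith)
      linarith
  -- so s - m•1 is not invertible
  have hnonunit : ¬ IsUnit (s - algebraMap ℝ A m) := by
    rw [spectrum.mem_iff] at hm_mem
    intro h
    rw [show algebraMap ℝ A m - s = -(s - algebraMap ℝ A m) from (neg_sub _ _).symm] at hm_mem
    exact hm_mem h.neg
  -- u = a * su⁻¹ is a unitary unit
  set uu : Aˣ := a * su⁻¹ with huu_def
  set u : A := ((uu : Aˣ) : A) with hu_def
  have hu_coe : u = (a : A) * ((su⁻¹ : Aˣ) : A) := by rw [hu_def, huu_def]; push_cast; rfl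
  have hstar_sinv : star (su⁻¹) = su⁻¹ := Units.ext (by rw [Units.coe_star]; exact hsinv_sa)
  have hstar_aa : star a * a = su * su := by rw [← hbu_def, hsusu]
  have huu_units : star uu * uu = 1 := by
    rw [huu_def, star_mul, hstar_sinv]
    calc su⁻¹ * star a * (a * su⁻¹) = su⁻¹ * (star a * a) * su⁻¹ := by group
    _ = su⁻¹ * (su * su) * su⁻¹ := by rw [hstar_aa]
    _ = 1 := by group
  have huu : star u * u = 1 := by
    rw [hu_def, ← Units.coe_star, ← Units.val_mul, huu_units, Units.val_one]
  have hu_norm : ‖u‖ = 1 := by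
    have h1 : ‖u‖ * ‖u‖ = 1 := by rw [← CStarRing.norm_star_mul_self, huu, CStarRing.norm_one]
    nlinarith [norm_nonneg u]
  -- z = a - m • u is not invertible and at distance m
  set z : A := (a : A) - algebraMap ℝ A m * u with hz_def
  have hz_eq : z = u * (s - algebraMap ℝ A m) := by
    rw [hz_def, mul_sub]
    congr 1
    · rw [hu_coe, mul_assoc, ← hsu, Units.inv_mul, mul_one]
    · exact Algebra.commutes m u
  have hz_nonunit : ¬ IsUnit z := by
    rw [hz_eq, hu_def]
    intro h
    exact hnonunit ((Units.isUnit_units_mul uu _).mp h)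
  have hz_mem : z ∈ {x : A | ¬ IsUnit x} := hz_nonunit
  have hdist : dist (a : A) z = m := by
    rw [dist_eq_norm, hz_def, sub_sub_cancel, ← Algebra.smul_def, norm_smul, hu_norm,
      mul_one, Real.norm_eq_abs, abs_of_pos hm_pos]
  have hm_eq : m = ‖((a⁻¹ : Aˣ) : A)‖⁻¹ := by rw [hm_def, hnorm_eq]
  refine le_antisymm ?_ ?_
  · rw [← hm_eq, ← hdist]; exact Metric.infDist_le_dist_of_mem hz_mem
  · by_contra hlt
    push_neg at hlt
    rw [← hm_eq] at hlt
    obtain ⟨y, hy_mem, hy_dist⟩ := (Metric.infDist_lt_iff ⟨z, hz_mem⟩).mp hlt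
    apply hy_mem
    refine (a.ofNearby y ?_).isUnit
    rw [← hm_eq]
    rwa [dist_eq_norm, norm_sub_rev] at hy_dist
end

section
/- Let X be a compact Hausdorff space and let f ∈ C(X, ℂ) with ‖f‖∞ ≤ 1 and f not invertible (i.e., 0 ∈ closure of range of |f|). If f = λu + (1−λ)g with u ∈ C(X, ℂ) unimodular (|u| ≡ 1) and g ∈ C(X, ℂ) with ‖g‖∞ ≤ 1, then λ ≤ (1 − dist(f, C(X)⁻¹))/2; that is, λ(f) ≤ 1/2(1 − α_q(f)), where α_q(f) = dist(f, C(X)⁻¹). -/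
theorem stmt_10 {X : Type*} [TopologicalSpace X] [CompactSpace X] [T2Space X] [Nonempty X]
    (f : C(X, ℂ)) (hf : ‖f‖ ≤ 1) (hnu : ¬ IsUnit f)
    (lam : ℝ) (h0 : 0 < lam) (h1 : lam ≤ 1) (u g : C(X, ℂ))
    (hu : ∀ x, ‖u x‖ = 1) (hg : ‖g‖ ≤ 1)
    (hdec : f = lam • u + (1 - lam) • g) :
    lam ≤ (1 - Metric.infDist f {h : C(X, ℂ) | IsUnit h}) / 2 := by
  -- f vanishes somewhere
  rw [ContinuousMap.isUnit_iff_forall_ne_zero, not_forall] at hnu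
  obtain ⟨x₀, hx₀⟩ := hnu
  push_neg at hx₀
  have hgx : ∀ x, ‖g x‖ ≤ 1 := fun x => (g.norm_coe_le_norm x).trans hg
  -- lam ≤ 1 - lam
  have key : lam ≤ 1 - lam := by
    have h := congrArg (fun h : C(X, ℂ) => h x₀) hdec
    simp only [ContinuousMap.add_apply, ContinuousMap.smul_apply, hx₀] at h
    have : (lam : ℝ) • u x₀ = -((1 - lam : ℝ) • g x₀) := by
      rw [eq_neg_iff_add_eq_zero]; exact h.symm
    have hn := congrArg norm this
    rw [norm_neg, norm_smul, norm_smul, hu x₀, mul_one, Real.norm_eq_abs,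
      Real.norm_eq_abs, abs_of_pos h0, abs_of_nonneg (by linarith)] at hn
    calc lam = (1 - lam) * ‖g x₀‖ := hn
      _ ≤ (1 - lam) * 1 := by
          apply mul_le_mul_of_nonneg_left (hgx x₀) (by linarith)
      _ = 1 - lam := mul_one _
  have hnu' : ‖u‖ = 1 := by
    apply le_antisymm
    · exact (ContinuousMap.norm_le u zero_le_one).mpr fun x => (hu x).le
    · calc (1:ℝ) = ‖u (Classical.arbitrary X)‖ := (hu _).symm
        _ ≤ ‖u‖ := u.norm_coe_le_norm _
  -- infDist ≤ 1 - 2*lam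
  have hd : Metric.infDist f {h : C(X, ℂ) | IsUnit h} ≤ 1 - 2 * lam := by
    apply le_of_forall_pos_le_add
    intro ε hε
    set v : C(X, ℂ) := f + (1 - 2 * lam + ε) • u with hv
    have hvu : IsUnit v := by
      rw [ContinuousMap.isUnit_iff_forall_ne_zero]
      intro x
      have hvx : v x = ((1 - lam + ε : ℝ)) • u x + ((1 - lam : ℝ)) • g x := by
        simp only [hv, ContinuousMap.add_apply, ContinuousMap.smul_apply, hdec]
        push_cast
        module
      intro hzero
      rw [hvx] at hzero
      have : ((1 - lam + ε : ℝ)) • u x = -(((1 - lam : ℝ)) • g x) := by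
        rw [eq_neg_iff_add_eq_zero]; exact hzero
      have hn := congrArg norm this
      rw [norm_neg, norm_smul, norm_smul, hu x, mul_one, Real.norm_eq_abs,
        Real.norm_eq_abs, abs_of_pos (by linarith), abs_of_nonneg (by linarith)] at hn
      have : (1 - lam) * ‖g x‖ ≤ (1 - lam) * 1 :=
        mul_le_mul_of_nonneg_left (hgx x) (by linarith)
      rw [mul_one] at this
      linarith
    have := Metric.infDist_le_dist_of_mem (x := f) (s := {h : C(X, ℂ) | IsUnit h}) hvu
    calc Metric.infDist f {h : C(X, ℂ) | IsUnit h} ≤ dist f v := this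
      _ = ‖(1 - 2 * lam + ε : ℝ) • u‖ := by
          rw [dist_eq_norm', hv]; congr 1; abel
      _ = |1 - 2 * lam + ε| * ‖u‖ := by rw [norm_smul, Real.norm_eq_abs]
      _ = 1 - 2 * lam + ε := by rw [hnu', mul_one, abs_of_pos (by linarith)]
  linarith
end

section
/- Let X be a compact Hausdorff space and f ∈ C(X, ℂ) a function that is not invertible (vanishes somewhere or 0 is in the closure of its range of moduli). If u ∈ C(X, ℂ) satisfies |u(x)| = 1 for all x, then ‖f − u‖∞ ≥ 1 + dist(f, C(X)⁻¹). -/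
/-! A non-invertible `f` has a zero `x`, where `‖f x - u x‖ = 1`; so `‖f - u‖ ≥ 1`. Conversely, for
`t > ‖f - u‖` the function `f + (t - 1) • u = t • u + (f - u)` vanishes nowhere, because pointwise
`‖t • u‖ = t > ‖f - u‖`, and it lies at distance `t - 1` from `f`. -/

namespace ContinuousMap

variable {X : Type*} [TopologicalSpace X]

section NormedField

variable {𝕜 : Type*} [NormedField 𝕜] [CompleteSpace 𝕜]

theorem isUnit_of_forall_norm_sub_lt {f g : C(X, 𝕜)} (h : ∀ x, ‖f x - g x‖ < ‖g x‖) : IsUnit f := by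
  refine (f.isUnit_iff_forall_ne_zero).mpr fun x hx => ?_
  simpa [hx] using h x

theorem le_norm_sub_of_not_isUnit [CompactSpace X] {f u : C(X, 𝕜)} (hf : ¬IsUnit f) {r : ℝ}
    (hu : ∀ x, r ≤ ‖u x‖) : r ≤ ‖f - u‖ := by
  by_contra! h
  exact hf <| isUnit_of_forall_norm_sub_lt fun x =>
    calc ‖f x - u x‖ ≤ ‖f - u‖ := by simpa using (f - u).norm_coe_le_norm x
      _ < r := h
      _ ≤ ‖u x‖ := hu x

end NormedField

theorem infDist_isUnit_le [CompactSpace X] {𝕜 : Type*} [RCLike 𝕜] {f u : C(X, 𝕜)}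
    (hu : ∀ x, ‖u x‖ = 1) {t : ℝ} (ht : ‖f - u‖ < t) (h1t : 1 ≤ t) :
    Metric.infDist f {h : C(X, 𝕜) | IsUnit h} ≤ t - 1 := by
  have hunit : IsUnit (f + (t - 1) • u) := isUnit_of_forall_norm_sub_lt (g := t • u) fun x => by
    have hx : (f + (t - 1) • u) x - (t • u) x = f x - u x := by
      rw [add_apply, smul_apply, smul_apply, sub_smul, one_smul]
      abel
    calc ‖(f + (t - 1) • u) x - (t • u) x‖ = ‖(f - u) x‖ := by rw [hx, sub_apply]
      _ ≤ ‖f - u‖ := (f - u).norm_coe_le_norm x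
      _ < t := ht
      _ = ‖(t • u) x‖ := by
        rw [smul_apply, norm_smul, hu, mul_one, Real.norm_of_nonneg (by linarith)]
  calc Metric.infDist f {h | IsUnit h} ≤ dist f (f + (t - 1) • u) :=
        Metric.infDist_le_dist_of_mem hunit
    _ = ‖t - 1‖ * ‖u‖ := by rw [dist_eq_norm, sub_add_cancel_left, norm_neg, norm_smul]
    _ ≤ t - 1 := by
        rw [Real.norm_of_nonneg (by linarith)]
        exact mul_le_of_le_one_right (by linarith) ((norm_le u zero_le_one).mpr fun x => (hu x).le)

end ContinuousMap

theorem stmt_11_general {X : Type*} [TopologicalSpace X] [CompactSpace X]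
    (f : C(X, ℂ)) (hnu : ¬ IsUnit f) (u : C(X, ℂ)) (hu : ∀ x, ‖u x‖ = 1) :
    1 + Metric.infDist f {h : C(X, ℂ) | IsUnit h} ≤ ‖f - u‖ := by
  have h1 : 1 ≤ ‖f - u‖ := ContinuousMap.le_norm_sub_of_not_isUnit hnu fun x => (hu x).ge
  refine le_of_forall_gt_imp_ge_of_dense fun t ht => ?_
  have := ContinuousMap.infDist_isUnit_le hu ht (h1.trans ht.le)
  linarith

theorem stmt_11 {X : Type*} [TopologicalSpace X] [CompactSpace X] [T2Space X] [Nonempty X]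
    (f : C(X, ℂ)) (hnu : ¬ IsUnit f) (u : C(X, ℂ)) (hu : ∀ x, ‖u x‖ = 1) :
    1 + Metric.infDist f {h : C(X, ℂ) | IsUnit h} ≤ ‖f - u‖ :=
  stmt_11_general f hnu u hu
end

section
/- Let A be a unital C*-algebra, a ∈ A not invertible, and u ∈ A unitary. If ‖a − u‖ < β, then β > 1 and a + (β−1)u is invertible in A; consequently dist(a, U(A)) ≥ 1 + dist(a, A⁻¹). -/
/-!
A unitary `u` is a unit with `‖u⁻¹‖ = 1`, so every element within distance `‖c‖` of `c • u` is
invertible. If `a` is not invertible and `‖a - u‖ < β`, this forces `β > 1` (take `c = 1`), and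
`a + (β - 1) • u`, whose distance to `β • u` is `‖a - u‖`, is invertible (take `c = β`). That
element lies at distance `β - 1` from `a`; letting `β` decrease to `‖a - u‖` gives
`dist(a, A⁻¹) ≤ ‖a - u‖ - 1`.
-/

namespace Unitary

variable {𝕜 A : Type*} [NormedRing A] [StarRing A] [CStarRing A] [HasSummableGeomSeries A]

theorem isUnit_of_norm_sub_lt_one {x u : A} (hu : u ∈ unitary A) (h : ‖x - u‖ < 1) :
    IsUnit x := by
  nontriviality A
  refine ((toUnits ⟨u, hu⟩).ofNearby x ?_).isUnit
  simpa [CStarRing.norm_of_mem_unitary hu] using h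

theorem isUnit_of_norm_sub_smul_lt [NormedField 𝕜] [NormedAlgebra 𝕜 A]
    {x u : A} (hu : u ∈ unitary A) {c : 𝕜} (h : ‖x - c • u‖ < ‖c‖) : IsUnit x := by
  have hc : c ≠ 0 := norm_pos_iff.mp ((norm_nonneg _).trans_lt h)
  have hscaled : ‖c⁻¹ • x - u‖ < 1 := by
    rwa [← inv_smul_smul₀ hc u, ← smul_sub, norm_smul, norm_inv,
      inv_mul_lt_one₀ (norm_pos_iff.mpr hc)]
  exact (isUnit_smul_iff (Units.mk0 c⁻¹ (inv_ne_zero hc)) x).mp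
    (isUnit_of_norm_sub_lt_one hu hscaled)

theorem isUnit_add_smul_of_norm_sub_lt [RCLike 𝕜] [NormedAlgebra 𝕜 A]
    {a u : A} (hu : u ∈ unitary A) {β : ℝ} (h : ‖a - u‖ < β) :
    IsUnit (a + ((β - 1 : ℝ) : 𝕜) • u) := by
  refine isUnit_of_norm_sub_smul_lt hu (c := (β : 𝕜)) ?_
  have hβ : 0 < β := (norm_nonneg _).trans_lt h
  rwa [RCLike.norm_ofReal, abs_of_pos hβ, RCLike.ofReal_sub, RCLike.ofReal_one, sub_smul, one_smul,
    add_sub_assoc, sub_sub_cancel_left, ← sub_eq_add_neg]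

theorem one_lt_of_norm_sub_lt_of_not_isUnit {a u : A} (ha : ¬ IsUnit a) (hu : u ∈ unitary A)
    {β : ℝ} (h : ‖a - u‖ < β) : 1 < β := by
  by_contra! hβ
  exact ha <| isUnit_of_norm_sub_lt_one hu (h.trans_le hβ)

theorem one_add_infDist_isUnit_le_dist (𝕜 : Type*) [RCLike 𝕜] [NormedAlgebra 𝕜 A] {a u : A}
    (ha : ¬ IsUnit a) (hu : u ∈ unitary A) :
    1 + Metric.infDist a {x : A | IsUnit x} ≤ dist a u := by
  have : Nontrivial A := not_subsingleton_iff_nontrivial.mp fun _ => ha (isUnit_of_subsingleton a)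
  rw [← le_sub_iff_add_le']
  refine le_of_forall_gt_imp_ge_of_dense fun r hr => ?_
  have h : ‖a - u‖ < r + 1 := by rw [← dist_eq_norm]; linarith
  have hr : 0 < r := by linarith [one_lt_of_norm_sub_lt_of_not_isUnit ha hu h]
  calc Metric.infDist a {x : A | IsUnit x}
      ≤ dist a (a + ((r + 1 - 1 : ℝ) : 𝕜) • u) :=
        Metric.infDist_le_dist_of_mem (isUnit_add_smul_of_norm_sub_lt hu h)
    _ = r := by
        rw [dist_self_add_right, add_sub_cancel_right, norm_smul, RCLike.norm_ofReal,
          abs_of_pos hr, CStarRing.norm_of_mem_unitary hu, mul_one]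

end Unitary

theorem stmt_12_general {A : Type*} [NormedRing A] [StarRing A] [CStarRing A] [CompleteSpace A]
    [NormedAlgebra ℂ A]
    (a : A) (hnu : ¬ IsUnit a) (u : A) (hu : u ∈ unitary A) (β : ℝ) (hb : ‖a - u‖ < β) :
    1 < β ∧ IsUnit (a + (((β - 1 : ℝ) : ℂ)) • u) ∧
      1 + Metric.infDist a {x : A | IsUnit x} ≤ Metric.infDist a (unitary A : Set A) :=
  ⟨Unitary.one_lt_of_norm_sub_lt_of_not_isUnit hnu hu hb,
    Unitary.isUnit_add_smul_of_norm_sub_lt hu hb,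
    (Metric.le_infDist ⟨1, one_mem _⟩).mpr fun _ hv =>
      Unitary.one_add_infDist_isUnit_le_dist ℂ hnu hv⟩

theorem stmt_12 {A : Type*} [NormedRing A] [StarRing A] [CStarRing A] [CompleteSpace A]
    [NormedAlgebra ℂ A] [StarModule ℂ A]
    (a : A) (hnu : ¬ IsUnit a) (u : A) (hu : u ∈ unitary A) (β : ℝ) (hb : ‖a - u‖ < β) :
    1 < β ∧ IsUnit (a + (((β - 1 : ℝ) : ℂ)) • u) ∧
      1 + Metric.infDist a {x : A | IsUnit x} ≤ Metric.infDist a (unitary A : Set A) :=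
  stmt_12_general a hnu u hu β hb
end

section
/- Let X be a compact Hausdorff space, f ∈ C(X,ℂ) with ‖f‖∞ ≤ 1 and f not invertible, and set α = dist(f, C(X)⁻¹). Then dist(f, {u ∈ C(X,ℂ) : |u| ≡ 1}) = 1 + α. -/
private lemma real_le_of_eps {a b : ℝ} (h : ∀ ε > (0:ℝ), a ≤ b + ε) : a ≤ b := by
  by_contra h'
  push_neg at h'
  have := h ((a - b)/2) (by linarith)
  linarith

theorem stmt_14 {X : Type*} [TopologicalSpace X] [CompactSpace X] [T2Space X] [Nonempty X]
    (f : C(X, ℂ)) (hf : ‖f‖ ≤ 1) (hnu : ¬ IsUnit f) :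
    Metric.infDist f {u : C(X, ℂ) | ∀ x, ‖u x‖ = 1} =
      1 + Metric.infDist f {h : C(X, ℂ) | IsUnit h} := by
  set U : Set C(X, ℂ) := {u : C(X, ℂ) | ∀ x, ‖u x‖ = 1} with hUdef
  set I : Set C(X, ℂ) := {h : C(X, ℂ) | IsUnit h} with hIdef
  have hIne : I.Nonempty := ⟨1, isUnit_one⟩
  have hUne : U.Nonempty := ⟨1, fun x => by simp⟩
  set α := Metric.infDist f I with hα
  have hα0 : 0 ≤ α := Metric.infDist_nonneg
  -- Step A: α ≤ 1
  have hα1 : α ≤ 1 := by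
    refine real_le_of_eps fun ε hε => ?_
    set g := f - ContinuousMap.const X ((1 + ε : ℝ) : ℂ) with hg
    have hgu : IsUnit g := by
      rw [ContinuousMap.isUnit_iff_forall_ne_zero]
      intro x hx
      have h2 : f x = ((1 + ε : ℝ) : ℂ) := by
        have : f x - ((1 + ε : ℝ) : ℂ) = 0 := hx
        linear_combination this
      have h3 : ‖f x‖ ≤ 1 := le_trans (f.norm_coe_le_norm x) hf
      rw [h2] at h3
      rw [Complex.norm_real, Real.norm_eq_abs, abs_of_pos (by linarith)] at h3
      linarith
    calc α ≤ dist f g := Metric.infDist_le_dist_of_mem hgu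
      _ = ‖ContinuousMap.const X ((1 + ε : ℝ) : ℂ)‖ := by
          rw [dist_eq_norm, hg]; congr 1; abel
      _ ≤ 1 + ε := by
          refine ContinuousMap.norm_le _ (by linarith) |>.mpr fun x => ?_
          rw [ContinuousMap.const_apply, Complex.norm_real, Real.norm_eq_abs,
            abs_of_pos (by linarith)]
  -- Step B: upper bound
  have hupper : Metric.infDist f U ≤ 1 + α := by
    refine real_le_of_eps fun ε hε => ?_
    set δ := ε / 2 with hδ
    have hδ0 : 0 < δ := by positivity
    obtain ⟨g, hgI, hgd⟩ := (Metric.infDist_lt_iff hIne).mp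
      (show Metric.infDist f I < α + δ by linarith)
    have hgne : ∀ x, g x ≠ 0 := (ContinuousMap.isUnit_iff_forall_ne_zero g).mp hgI
    have hgnorm : ∀ x, (0:ℝ) < ‖g x‖ := fun x => norm_pos_iff.mpr (hgne x)
    set u : C(X, ℂ) := ⟨fun x => g x / ((‖g x‖ : ℝ) : ℂ), by
      exact (map_continuous g).div
        (Complex.continuous_ofReal.comp (map_continuous g).norm)
        (fun x => Complex.ofReal_ne_zero.mpr (hgnorm x).ne')⟩ with hu
    have huU : u ∈ U := by
      intro x
      simp only [hu, ContinuousMap.coe_mk]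
      rw [norm_div, Complex.norm_real, Real.norm_eq_abs, abs_of_pos (hgnorm x),
        div_self (hgnorm x).ne']
    -- ‖g‖ bound
    have hgnorm2 : ‖g‖ ≤ 2 + δ := by
      calc ‖g‖ ≤ ‖f‖ + ‖g - f‖ := by
            have := norm_add_le f (g - f); simpa using this
        _ ≤ 1 + (α + δ) := by
            have : ‖g - f‖ = dist f g := by rw [dist_eq_norm, norm_sub_rev]
            rw [this]; linarith [hgd.le]
        _ ≤ 2 + δ := by linarith
    -- pointwise bound on ‖f x - u x‖
    have hpt : ∀ x, ‖f x - u x‖ ≤ (α + δ) + (1 + δ) := by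
      intro x
      have h1 : ‖f x - g x‖ ≤ α + δ := by
        calc ‖f x - g x‖ = ‖(f - g) x‖ := by simp
          _ ≤ ‖f - g‖ := ContinuousMap.norm_coe_le_norm _ x
          _ = dist f g := (dist_eq_norm f g).symm
          _ ≤ α + δ := hgd.le
      have h2 : ‖g x - u x‖ = |‖g x‖ - 1| := by
        have heq : g x - u x = (((‖g x‖ - 1) / ‖g x‖ : ℝ) : ℂ) * g x := by
          simp only [hu, ContinuousMap.coe_mk]
          have hne : ((‖g x‖ : ℝ) : ℂ) ≠ 0 := Complex.ofReal_ne_zero.mpr (hgnorm x).ne'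
          have hne2 : ((‖g x‖ : ℝ) : ℂ) ≠ 0 :=
            Complex.ofReal_ne_zero.mpr (norm_ne_zero_iff.mpr (hgne x))
          push_cast
          field_simp
        rw [heq, norm_mul, Complex.norm_real, Real.norm_eq_abs, abs_div,
          abs_of_pos (hgnorm x), div_mul_eq_mul_div, mul_div_assoc,
          div_self (hgnorm x).ne', mul_one]
      have h3 : |‖g x‖ - 1| ≤ 1 + δ := by
        rcases le_total (‖g x‖) 1 with h | h
        · rw [abs_of_nonpos (by linarith)]
          have := (hgnorm x).le
          linarith
        · rw [abs_of_nonneg (by linarith)]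
          have := le_trans (g.norm_coe_le_norm x) hgnorm2
          linarith
      calc ‖f x - u x‖ ≤ ‖f x - g x‖ + ‖g x - u x‖ := by
            have := norm_add_le (f x - g x) (g x - u x); simpa using this
        _ ≤ (α + δ) + (1 + δ) := by rw [h2] at *; linarith
    have hdist : dist f u ≤ (α + δ) + (1 + δ) := by
      rw [dist_eq_norm]
      refine ContinuousMap.norm_le _ (by positivity) |>.mpr fun x => ?_
      simpa using hpt x
    calc Metric.infDist f U ≤ dist f u := Metric.infDist_le_dist_of_mem huU
      _ ≤ (α + δ) + (1 + δ) := hdist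
      _ = 1 + α + ε := by rw [hδ]; ring
  -- Step C: lower bound
  have hlower : 1 + α ≤ Metric.infDist f U := by
    by_contra h'
    push_neg at h'
    obtain ⟨u, huU, hud⟩ := (Metric.infDist_lt_iff hUne).mp h'
    -- f vanishes somewhere
    obtain ⟨x₀, hx₀⟩ : ∃ x, f x = 0 := by
      by_contra h
      push_neg at h
      exact hnu ((ContinuousMap.isUnit_iff_forall_ne_zero f).mpr h)
    set β := dist f u with hβ
    have hβnorm : β = ‖f - u‖ := dist_eq_norm f u
    have hβ1 : 1 ≤ β := by
      have : ‖f x₀ - u x₀‖ ≤ β := by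
        calc ‖f x₀ - u x₀‖ = ‖(f - u) x₀‖ := by simp
          _ ≤ ‖f - u‖ := ContinuousMap.norm_coe_le_norm _ x₀
          _ = β := hβnorm.symm
      rw [hx₀, zero_sub, norm_neg, huU x₀] at this
      exact this
    have huI : u ∈ I := (ContinuousMap.isUnit_iff_forall_ne_zero u).mpr
      fun x => norm_ne_zero_iff.mp (by rw [huU x]; norm_num)
    have key : α ≤ β - 1 := by
      refine real_le_of_eps fun ε hε => ?_
      rcases le_or_gt 1 ε with h1 | h1
      · have : α ≤ β := Metric.infDist_le_dist_of_mem huI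
        linarith
      · set t := (1 - ε) / β with ht
        have hβ0 : (0:ℝ) < β := by linarith
        have ht0 : 0 ≤ t := div_nonneg (by linarith) hβ0.le
        have htβ : t * β = 1 - ε := div_mul_cancel₀ _ hβ0.ne'
        have ht1 : t ≤ 1 := by
          rw [div_le_one hβ0]; linarith
        set g := u + (t : ℝ) • (f - u) with hg
        have hgu : IsUnit g := by
          rw [ContinuousMap.isUnit_iff_forall_ne_zero]
          intro x hx
          have h2 : ‖t • ((f - u) x)‖ ≤ t * β := by
            rw [norm_smul, Real.norm_eq_abs, abs_of_nonneg ht0]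
            exact mul_le_mul_of_nonneg_left
              (le_trans (ContinuousMap.norm_coe_le_norm _ x) hβnorm.ge) ht0
          have h3 : g x = u x + t • ((f - u) x) := by simp [hg]
          have h4 : ‖u x‖ ≤ ‖g x‖ + ‖t • ((f - u) x)‖ := by
            calc ‖u x‖ = ‖g x - t • ((f - u) x)‖ := by rw [h3]; ring_nf
              _ ≤ ‖g x‖ + ‖t • ((f - u) x)‖ := norm_sub_le _ _
          rw [hx, huU x, norm_zero, zero_add] at h4
          rw [htβ] at h2
          linarith
        have hfg : f - g = ((1 - t : ℝ)) • (f - u) := by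
          rw [hg]
          ext x
          simp only [ContinuousMap.sub_apply, ContinuousMap.add_apply,
            ContinuousMap.smul_apply, ContinuousMap.sub_apply]
          ring_nf
          module
        have hnfg : ‖f - g‖ = (1 - t) * β := by
          rw [hfg, norm_smul, Real.norm_eq_abs, abs_of_nonneg (by linarith), hβnorm]
        calc α ≤ dist f g := Metric.infDist_le_dist_of_mem hgu
          _ = (1 - t) * β := by rw [dist_eq_norm, hnfg]
          _ = β - 1 + ε := by rw [sub_mul, one_mul, htβ]; ring
    linarith
  linarith
end

section
/- Let X be a compact Hausdorff space and f ∈ C(X, ℂ) nowhere vanishing with ‖f‖∞ ≤ 1 and m = min|f|. For every λ with 1/2 ≤ λ ≤ (1+m)/2 there exist unimodular functions u₁, u₂ ∈ C(X, ℂ) with f = λu₁ + (1−λ)u₂; and for λ > (1+m)/2 no decomposition f = λu + (1−λ)g with |u| ≡ 1, ‖g‖∞ ≤ 1 exists. Hence λ(f) = (1+m)/2 where λ is the Aron–Lohman λ-function of C(X, ℂ). -/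
/-!
Write `f x = ‖f x‖ ω(x)` with `|ω(x)| = 1`. For `t = ‖f x‖` the circles `|z| = λ` and
`|t - z| = 1 - λ` meet exactly when `|2λ - 1| ≤ t ≤ 1`; choosing their intersection point `z(t)`
in the closed upper half plane makes it continuous in `t`, and then `u₁ = ω z(t) / λ`,
`u₂ = ω (t - z(t)) / (1 - λ)` are unimodular with `f = λ u₁ + (1 - λ) u₂`.
Conversely `‖λ u + (1 - λ) g‖ ≥ λ - (1 - λ) = 2λ - 1` whenever `|u| = 1` and `‖g‖ ≤ 1`,
so evaluating at a point where `|f| = m` rules out every `λ > (1 + m) / 2`.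
-/

open Complex

/-- The real part `a` of a point of `{|z| = λ} ∩ {|t - z| = 1 - λ}`: subtracting the two equations
gives `2 a t = t² + 2λ - 1`. -/
noncomputable def circleInterRe (lam t : ℝ) : ℝ := (t ^ 2 + 2 * lam - 1) / (2 * t)

noncomputable def circleInter (lam t : ℝ) : ℂ :=
  circleInterRe lam t + √(lam ^ 2 - circleInterRe lam t ^ 2) * I

section CircleInter

variable {lam t : ℝ}

lemma sq_circleInterRe_le (ht : 0 < t) (hlow : |2 * lam - 1| ≤ t) (hup : t ≤ 1) :
    circleInterRe lam t ^ 2 ≤ lam ^ 2 := by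
  obtain ⟨hlow₁, hlow₂⟩ := abs_le.1 hlow
  apply sq_le_sq'
  · rw [circleInterRe, le_div_iff₀ (by positivity)]
    nlinarith
  · rw [circleInterRe, div_le_iff₀ (by positivity)]
    nlinarith

lemma norm_circleInter (ht : 0 < t) (hlow : |2 * lam - 1| ≤ t) (hup : t ≤ 1) :
    ‖circleInter lam t‖ = lam := by
  have hlam : 0 ≤ lam := by linarith [neg_abs_le (2 * lam - 1)]
  rw [circleInter, norm_add_mul_I, Real.sq_sqrt (sub_nonneg.2 (sq_circleInterRe_le ht hlow hup)),
    add_sub_cancel, Real.sqrt_sq hlam]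

lemma norm_sub_circleInter (ht : 0 < t) (hlow : |2 * lam - 1| ≤ t) (hup : t ≤ 1) :
    ‖(t : ℂ) - circleInter lam t‖ = 1 - lam := by
  have hlam : lam ≤ 1 := by linarith [le_abs_self (2 * lam - 1)]
  have hre : 2 * circleInterRe lam t * t = t ^ 2 + 2 * lam - 1 := by
    rw [circleInterRe]
    field_simp
  have hsq : (t - circleInterRe lam t) ^ 2 + (-√(lam ^ 2 - circleInterRe lam t ^ 2)) ^ 2
      = (1 - lam) ^ 2 := by
    rw [neg_sq, Real.sq_sqrt (sub_nonneg.2 (sq_circleInterRe_le ht hlow hup))]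
    linear_combination -hre
  rw [circleInter, show (t : ℂ) - (circleInterRe lam t + √(lam ^ 2 - circleInterRe lam t ^ 2) * I)
      = ((t - circleInterRe lam t : ℝ) : ℂ) + ((-√(lam ^ 2 - circleInterRe lam t ^ 2) : ℝ) : ℂ) * I
      by push_cast; ring, norm_add_mul_I, hsq, Real.sqrt_sq (sub_nonneg.2 hlam)]

lemma continuousOn_circleInter : ContinuousOn (circleInter lam) {0}ᶜ := by
  unfold circleInter circleInterRe
  fun_prop (disch := intro t ht; simpa using ht)

end CircleInter

noncomputable def unimodularFst (lam : ℝ) (w : ℂ) : ℂ := w / ‖w‖ * circleInter lam ‖w‖ / lam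

noncomputable def unimodularSnd (lam : ℝ) (w : ℂ) : ℂ :=
  w / ‖w‖ * (‖w‖ - circleInter lam ‖w‖) / (1 - lam)

section Unimodular

variable {lam : ℝ} {w : ℂ}

lemma norm_unimodularFst (hw : w ≠ 0) (hlow : |2 * lam - 1| ≤ ‖w‖) (hup : ‖w‖ ≤ 1)
    (hlam : lam ≠ 0) : ‖unimodularFst lam w‖ = 1 := by
  have hlam₀ : 0 ≤ lam := by linarith [neg_abs_le (2 * lam - 1)]
  rw [unimodularFst, norm_div, norm_mul, norm_div, norm_circleInter (norm_pos_iff.2 hw) hlow hup,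
    norm_real, norm_real, Real.norm_of_nonneg (norm_nonneg w), Real.norm_of_nonneg hlam₀,
    div_self (norm_ne_zero_iff.2 hw), one_mul, div_self hlam]

lemma norm_unimodularSnd (hw : w ≠ 0) (hlow : |2 * lam - 1| ≤ ‖w‖) (hup : ‖w‖ ≤ 1)
    (hlam : lam ≠ 1) : ‖unimodularSnd lam w‖ = 1 := by
  have hlam₁ : 0 ≤ 1 - lam := by linarith [le_abs_self (2 * lam - 1)]
  rw [unimodularSnd, norm_div, norm_mul, norm_div,
    norm_sub_circleInter (norm_pos_iff.2 hw) hlow hup, ← ofReal_one, ← ofReal_sub, norm_real,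
    norm_real, Real.norm_of_nonneg (norm_nonneg w), Real.norm_of_nonneg hlam₁,
    div_self (norm_ne_zero_iff.2 hw), one_mul, div_self (sub_ne_zero.2 hlam.symm)]

lemma smul_unimodularFst_add_smul_unimodularSnd (hw : w ≠ 0) (h₀ : lam ≠ 0) (h₁ : lam ≠ 1) :
    lam • unimodularFst lam w + (1 - lam) • unimodularSnd lam w = w := by
  have h₀' : (lam : ℂ) ≠ 0 := by exact_mod_cast h₀
  have h₁' : (1 : ℂ) - lam ≠ 0 := by exact_mod_cast sub_ne_zero.2 h₁.symm
  have hw' : (‖w‖ : ℂ) ≠ 0 := by exact_mod_cast norm_ne_zero_iff.2 hw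
  rw [unimodularFst, unimodularSnd, real_smul, real_smul, ofReal_sub, ofReal_one]
  field_simp
  ring

lemma continuousOn_unimodularFst : ContinuousOn (unimodularFst lam) {0}ᶜ := by
  have := continuousOn_circleInter (lam := lam)
  unfold unimodularFst
  fun_prop (disch := intro t ht; simpa using ht)

lemma continuousOn_unimodularSnd : ContinuousOn (unimodularSnd lam) {0}ᶜ := by
  have := continuousOn_circleInter (lam := lam)
  unfold unimodularSnd
  fun_prop (disch := intro t ht; simpa using ht)

end Unimodular

theorem ContinuousMap.exists_unimodular_combination {X : Type*} [TopologicalSpace X] {lam : ℝ}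
    (f : C(X, ℂ)) (hf0 : ∀ x, f x ≠ 0) (hlow : ∀ x, |2 * lam - 1| ≤ ‖f x‖)
    (hup : ∀ x, ‖f x‖ ≤ 1) :
    ∃ u₁ u₂ : C(X, ℂ), (∀ x, ‖u₁ x‖ = 1) ∧ (∀ x, ‖u₂ x‖ = 1) ∧
      f = lam • u₁ + (1 - lam) • u₂ := by
  by_cases hlam : lam = 0 ∨ lam = 1
  · have hf1 x : ‖f x‖ = 1 := by
      refine le_antisymm (hup x) ?_
      have := hlow x
      rcases hlam with rfl | rfl <;> norm_num at this <;> exact this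
    refine ⟨f, f, hf1, hf1, ?_⟩
    ext x
    simp only [ContinuousMap.add_apply, ContinuousMap.smul_apply, ← add_smul, add_sub_cancel,
      one_smul]
  push Not at hlam
  refine ⟨⟨_, continuousOn_unimodularFst.comp_continuous f.continuous hf0⟩,
    ⟨_, continuousOn_unimodularSnd.comp_continuous f.continuous hf0⟩,
    fun x => norm_unimodularFst (hf0 x) (hlow x) (hup x) hlam.1,
    fun x => norm_unimodularSnd (hf0 x) (hlow x) (hup x) hlam.2, ?_⟩
  ext x
  exact (smul_unimodularFst_add_smul_unimodularSnd (hf0 x) hlam.1 hlam.2).symm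

lemma two_mul_sub_one_le_norm_smul_add_smul {E : Type*} [SeminormedAddCommGroup E]
    [NormedSpace ℝ E] {lam : ℝ} {u v : E} (hu : ‖u‖ = 1) (hv : ‖v‖ ≤ 1) (hlam : lam ≤ 1) :
    2 * lam - 1 ≤ ‖lam • u + (1 - lam) • v‖ := by
  have := norm_le_add_norm_add (lam • u) ((1 - lam) • v)
  rw [norm_smul, norm_smul, hu, mul_one, Real.norm_of_nonneg (sub_nonneg.2 hlam)] at this
  nlinarith [le_abs_self lam, Real.norm_eq_abs lam]

theorem stmt_17_general {X : Type*} [TopologicalSpace X] [CompactSpace X]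
    (f : C(X, ℂ)) (hf0 : ∀ x, f x ≠ 0) (hf : ‖f‖ ≤ 1)
    (m : ℝ) (hm : IsLeast (Set.range fun x => ‖f x‖) m) :
    (∀ lam : ℝ, 1 / 2 ≤ lam → lam ≤ (1 + m) / 2 →
      ∃ u₁ u₂ : C(X, ℂ), (∀ x, ‖u₁ x‖ = 1) ∧ (∀ x, ‖u₂ x‖ = 1) ∧
        f = lam • u₁ + (1 - lam) • u₂) ∧
    (∀ lam : ℝ, (1 + m) / 2 < lam → lam ≤ 1 →
      ¬ ∃ u g : C(X, ℂ), (∀ x, ‖u x‖ = 1) ∧ ‖g‖ ≤ 1 ∧ f = lam • u + (1 - lam) • g) ∧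
    sSup {lam : ℝ | 0 < lam ∧ lam ≤ 1 ∧ ∃ u g : C(X, ℂ), (∀ x, ‖u x‖ = 1) ∧ ‖g‖ ≤ 1 ∧
        f = lam • u + (1 - lam) • g} = (1 + m) / 2 := by
  obtain ⟨⟨x₀, hx₀⟩, hm_le⟩ := hm
  have hup x : ‖f x‖ ≤ 1 := (f.norm_coe_le_norm x).trans hf
  have hm₀ : 0 ≤ m := hx₀ ▸ norm_nonneg _
  have hm₁ : m ≤ 1 := hx₀ ▸ hup x₀
  have decompose (lam : ℝ) (h₁ : 1 / 2 ≤ lam) (h₂ : lam ≤ (1 + m) / 2) :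
      ∃ u₁ u₂ : C(X, ℂ), (∀ x, ‖u₁ x‖ = 1) ∧ (∀ x, ‖u₂ x‖ = 1) ∧
        f = lam • u₁ + (1 - lam) • u₂ :=
    f.exists_unimodular_combination hf0
      (fun x => by rw [abs_of_nonneg (by linarith)]; linarith [hm_le ⟨x, rfl⟩]) hup
  have bound (lam : ℝ) (hlam : lam ≤ 1) :
      (∃ u g : C(X, ℂ), (∀ x, ‖u x‖ = 1) ∧ ‖g‖ ≤ 1 ∧ f = lam • u + (1 - lam) • g) →
        lam ≤ (1 + m) / 2 := by
    rintro ⟨u, g, hu, hg, rfl⟩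
    have := two_mul_sub_one_le_norm_smul_add_smul (hu x₀) ((g.norm_coe_le_norm x₀).trans hg) hlam
    simp only [ContinuousMap.add_apply, ContinuousMap.smul_apply] at hx₀
    linarith
  refine ⟨decompose, fun lam hlt hle h => (bound lam hle h).not_gt hlt,
    IsGreatest.csSup_eq ⟨?_, ?_⟩⟩
  · obtain ⟨u₁, u₂, hu₁, hu₂, hf⟩ := decompose _ (by linarith) le_rfl
    exact ⟨by linarith, by linarith, u₁, u₂, hu₁,
      (u₂.norm_le zero_le_one).2 fun x => (hu₂ x).le, hf⟩
  · rintro lam ⟨-, hle, h⟩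
    exact bound lam hle h

theorem stmt_17 {X : Type*} [TopologicalSpace X] [CompactSpace X] [T2Space X] [Nonempty X]
    (f : C(X, ℂ)) (hf0 : ∀ x, f x ≠ 0) (hf : ‖f‖ ≤ 1)
    (m : ℝ) (hm : IsLeast (Set.range fun x => ‖f x‖) m) :
    (∀ lam : ℝ, 1 / 2 ≤ lam → lam ≤ (1 + m) / 2 →
      ∃ u₁ u₂ : C(X, ℂ), (∀ x, ‖u₁ x‖ = 1) ∧ (∀ x, ‖u₂ x‖ = 1) ∧
        f = lam • u₁ + (1 - lam) • u₂) ∧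
    (∀ lam : ℝ, (1 + m) / 2 < lam → lam ≤ 1 →
      ¬ ∃ u g : C(X, ℂ), (∀ x, ‖u x‖ = 1) ∧ ‖g‖ ≤ 1 ∧ f = lam • u + (1 - lam) • g) ∧
    sSup {lam : ℝ | 0 < lam ∧ lam ≤ 1 ∧ ∃ u g : C(X, ℂ), (∀ x, ‖u x‖ = 1) ∧ ‖g‖ ≤ 1 ∧
        f = lam • u + (1 - lam) • g} = (1 + m) / 2 :=
  stmt_17_general f hf0 hf m hm
end
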